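/- Let k be a perfect field and R = k[X_1,…,X_m,Y,Z,T]/(G) an affine domain, G = vY + h − f(Z,T), where v = ∏ p_i^{s_i} is a prime factorization in k[X_1,…,X_m], s_i > 1 for every i, and p_j² divides h for some j. If R is a regular ring, then k[Z,T]/(f(Z,T)) is a regular ring. -/

import Mathlib

noncomputable section
open MvPolynomial

/-- The embedding `k[X_1,…,X_m] → k[X_1,…,X_m,Y,Z,T]` (`Y,Z,T` are `Sum.inr 0,1,2`). -/
def embXv (k : Type) [Field k] (m : ℕ) :
    MvPolynomial (Fin m) k →ₐ[k] MvPolynomial (Fin m ⊕ Fin 3) k :=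
  rename Sum.inl

/-- The embedding `k[X_1,…,X_m,Z,T] → k[X_1,…,X_m,Y,Z,T]`. -/
def embHv (k : Type) [Field k] (m : ℕ) :
    MvPolynomial (Fin m ⊕ Fin 2) k →ₐ[k] MvPolynomial (Fin m ⊕ Fin 3) k :=
  rename (Sum.map id Fin.succ)

/-- The embedding `k[Z,T] → k[X_1,…,X_m,Y,Z,T]`. -/
def embFv (k : Type) [Field k] (m : ℕ) :
    MvPolynomial (Fin 2) k →ₐ[k] MvPolynomial (Fin m ⊕ Fin 3) k :=
  rename (fun j => Sum.inr j.succ)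

/-- The polynomial `G = v·Y + h - f(Z,T)` in `k[X_1,…,X_m,Y,Z,T]`. -/
def Gpoly (k : Type) [Field k] (m : ℕ) (v : MvPolynomial (Fin m) k)
    (h : MvPolynomial (Fin m ⊕ Fin 2) k) (f : MvPolynomial (Fin 2) k) :
    MvPolynomial (Fin m ⊕ Fin 3) k :=
  embXv k m v * MvPolynomial.X (Sum.inr 0) + embHv k m h - embFv k m f

/-- The Jacobian criterion for regularity of `k[X_1,…,X_m,Y,Z,T]/(G)` over a perfect
field `k`: the ideal generated by `G` and all its partial derivatives is the unit ideal. -/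
def JacRegular (k : Type) [Field k] (m : ℕ) (v : MvPolynomial (Fin m) k)
    (h : MvPolynomial (Fin m ⊕ Fin 2) k) (f : MvPolynomial (Fin 2) k) : Prop :=
  Ideal.span ({Gpoly k m v h f} ∪
      Set.range fun i : Fin m ⊕ Fin 3 => pderiv i (Gpoly k m v h f)) = ⊤

/-- The Jacobian criterion for regularity of `k[Z,T]/(f)` over a perfect field `k`. -/
def JacRegularf (k : Type) [Field k] (f : MvPolynomial (Fin 2) k) : Prop :=
  Ideal.span {f, pderiv 0 f, pderiv 1 f} = ⊤

/-! Since `p = p_j` satisfies `p² ∣ v` and `p² ∣ h`, the polynomial `G` and all its partial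
derivatives lie in `(p) + (f, ∂f/∂Z, ∂f/∂T)`, so regularity of `R` makes this ideal of
`k[X,Y,Z,T]` the unit ideal. Sending `X` to its class in `D = k[X]/(p) ≠ 0` and `Y` to `0`
turns this into `(f, ∂f/∂Z, ∂f/∂T) = 1` in `D[Z,T]`, and `D[Z,T] = k[Z,T] ⊗ₖ D` is faithfully
flat over `k[Z,T]`, so the same holds in `k[Z,T]`. -/

open scoped TensorProduct

theorem MvPolynomial.comap_map_map_algebraMap_eq_self {k D σ : Type*} [Field k] [CommRing D]
    [Algebra k D] [Nontrivial D] (I : Ideal (MvPolynomial σ k)) :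
    (I.map (map (algebraMap k D))).comap (map (algebraMap k D)) = I := by
  set e : MvPolynomial σ k ⊗[k] D ≃ₐ[k] MvPolynomial σ D :=
    (Algebra.TensorProduct.comm k _ _).trans ((algebraTensorAlgEquiv k D).restrictScalars k)
  have he : (map (algebraMap k D) : MvPolynomial σ k →+* MvPolynomial σ D) =
      (e : MvPolynomial σ k ⊗[k] D →+* MvPolynomial σ D).comp
        (algebraMap (MvPolynomial σ k) (MvPolynomial σ k ⊗[k] D)) := by
    ext x <;> simp [e]
  rw [he, ← Ideal.map_map, ← Ideal.comap_comap,
    Ideal.comap_map_of_bijective (e : MvPolynomial σ k ⊗[k] D →+* MvPolynomial σ D) e.bijective,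
    Ideal.comap_map_eq_self_of_faithfullyFlat]

theorem MvPolynomial.pderiv_rename_of_notMem_range {σ τ R : Type*} [CommRing R] {g : σ → τ}
    {i : τ} (hi : i ∉ Set.range g) (φ : MvPolynomial σ R) : pderiv i (rename g φ) = 0 := by
  induction φ using MvPolynomial.induction_on with
  | C a => simp
  | add p q hp hq => simp [hp, hq]
  | mul_X q s hq => simp [hq, pderiv_X_of_ne (fun h => hi ⟨s, h⟩)]

theorem MvPolynomial.pderiv_mem_of_sq_dvd {σ R : Type*} [CommRing R]
    {J : Ideal (MvPolynomial σ R)} {P a : MvPolynomial σ R} (hP : P ∈ J) (h : P ^ 2 ∣ a)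
    (i : σ) : pderiv i a ∈ J := by
  obtain ⟨b, rfl⟩ := h
  refine J.mem_of_dvd ⟨2 * pderiv i P * b + P * pderiv i b, ?_⟩ hP
  rw [pderiv_mul, Derivation.leibniz_pow]
  simp only [nsmul_eq_mul, smul_eq_mul]
  ring

theorem span_jacobian_Gpoly_le {k : Type} [Field k] {m : ℕ} {v : MvPolynomial (Fin m) k}
    {h : MvPolynomial (Fin m ⊕ Fin 2) k} {f : MvPolynomial (Fin 2) k}
    {J : Ideal (MvPolynomial (Fin m ⊕ Fin 3) k)} {P : MvPolynomial (Fin m ⊕ Fin 3) k}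
    (hP : P ∈ J) (hv : P ^ 2 ∣ embXv k m v) (hh : P ^ 2 ∣ embHv k m h)
    (hf : embFv k m f ∈ J) (hf' : ∀ i, embFv k m (pderiv i f) ∈ J) :
    Ideal.span ({Gpoly k m v h f} ∪
      Set.range fun i : Fin m ⊕ Fin 3 => pderiv i (Gpoly k m v h f)) ≤ J := by
  have hsq {a : MvPolynomial (Fin m ⊕ Fin 3) k} (ha : P ^ 2 ∣ a) : a ∈ J :=
    J.mem_of_dvd ((dvd_pow_self P two_ne_zero).trans ha) hP
  have hfd (i : Fin m ⊕ Fin 3) : pderiv i (embFv k m f) ∈ J := by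
    by_cases hi : i ∈ Set.range fun j : Fin 2 => (Sum.inr j.succ : Fin m ⊕ Fin 3)
    · obtain ⟨j, rfl⟩ := hi
      have hinj : Function.Injective fun j : Fin 2 => (Sum.inr j.succ : Fin m ⊕ Fin 3) :=
        fun a b hab => Fin.succ_injective _ (Sum.inr_injective hab)
      rw [embFv, pderiv_rename hinj]
      exact hf' j
    · rw [embFv, pderiv_rename_of_notMem_range hi]
      exact J.zero_mem
  rw [Ideal.span_le]
  rintro _ (rfl | ⟨i, rfl⟩)
  · exact J.sub_mem (J.add_mem (J.mul_mem_right _ (hsq hv)) (hsq hh)) hf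
  · simp only [Gpoly, map_sub, map_add, Derivation.leibniz, smul_eq_mul]
    exact J.sub_mem (J.add_mem (J.add_mem (J.mul_mem_right _ (hsq hv))
      (J.mul_mem_left _ (pderiv_mem_of_sq_dvd hP hv i))) (pderiv_mem_of_sq_dvd hP hh i)) (hfd i)

theorem eq_top_of_span_embXv_sup_map_embFv_eq_top {k : Type} [Field k] {m : ℕ}
    {q : MvPolynomial (Fin m) k} (hq : ¬IsUnit q) {I : Ideal (MvPolynomial (Fin 2) k)}
    (h : Ideal.span {embXv k m q} ⊔ I.map (embFv k m) = ⊤) : I = ⊤ := by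
  set D := MvPolynomial (Fin m) k ⧸ Ideal.span {q}
  have : Nontrivial D :=
    Ideal.Quotient.nontrivial_iff.mpr (by rwa [ne_eq, Ideal.span_singleton_eq_top])
  let Φ : MvPolynomial (Fin m ⊕ Fin 3) k →ₐ[k] MvPolynomial (Fin 2) D :=
    aeval (Sum.elim (fun i => C (Ideal.Quotient.mk _ (X i))) ![0, X 0, X 1])
  let φ : MvPolynomial (Fin m ⊕ Fin 3) k →+* MvPolynomial (Fin 2) D := Φ
  have hΦq : φ (embXv k m q) = 0 := by
    have : Φ.comp (embXv k m) = (IsScalarTower.toAlgHom k D _).comp (Ideal.Quotient.mkₐ k _) := by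
      ext i; simp [Φ, embXv]; rfl
    change (Φ.comp (embXv k m)) q = 0
    rw [this, AlgHom.comp_apply, Ideal.Quotient.mkₐ_eq_mk,
      Ideal.Quotient.eq_zero_iff_mem.mpr (Ideal.mem_span_singleton_self q), map_zero]
  have hΦf : φ.comp (embFv k m) = map (algebraMap k D) := by
    ext x i
    · simp [φ, Φ, embFv]
    · fin_cases x <;> simp [φ, Φ, embFv]
  have := congrArg (Ideal.map φ) h
  rw [Ideal.map_sup, Ideal.map_span, Set.image_singleton, hΦq,
    Ideal.span_singleton_eq_bot.mpr rfl, bot_sup_eq, ← Ideal.map_coe (embFv k m), Ideal.map_map,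
    hΦf, Ideal.map_top] at this
  rw [← comap_map_map_algebraMap_eq_self (D := D) I, this, Ideal.comap_top]

theorem stmt10_general (k : Type) [Field k] (m : ℕ)
    (v : MvPolynomial (Fin m) k) (h : MvPolynomial (Fin m ⊕ Fin 2) k)
    (f : MvPolynomial (Fin 2) k)
    (n : ℕ) (p : Fin n → MvPolynomial (Fin m) k) (s : Fin n → ℕ)
    (hprime : ∀ i, Prime (p i)) (hs : ∀ i, 1 < s i)
    (hfact : v = ∏ i, p i ^ s i)
    (j : Fin n)
    (hdvd : (rename (Sum.inl : Fin m → Fin m ⊕ Fin 2) (p j)) ^ 2 ∣ h)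
    (hreg : JacRegular k m v h f) :
    JacRegularf k f := by
  set P := embXv k m (p j)
  have hpv : p j ^ 2 ∣ v :=
    hfact ▸ (pow_dvd_pow _ (hs j)).trans (Finset.dvd_prod_of_mem _ (Finset.mem_univ j))
  have hPv : P ^ 2 ∣ embXv k m v := by simpa only [map_pow] using map_dvd (embXv k m) hpv
  have hPh : P ^ 2 ∣ embHv k m h := by
    have := map_dvd (embHv k m) hdvd
    rw [map_pow, embHv, rename_rename] at this
    exact this
  have hmem : ∀ g ∈ ({f, pderiv 0 f, pderiv 1 f} : Set _),
      embFv k m g ∈ Ideal.span {P} ⊔ (Ideal.span {f, pderiv 0 f, pderiv 1 f}).map (embFv k m) :=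
    fun g hg => Ideal.mem_sup_right (Ideal.mem_map_of_mem _ (Ideal.subset_span hg))
  have hJ : Ideal.span {P} ⊔ (Ideal.span {f, pderiv 0 f, pderiv 1 f}).map (embFv k m) = ⊤ :=
    top_unique <| hreg ▸ span_jacobian_Gpoly_le
      (Ideal.mem_sup_left (Ideal.mem_span_singleton_self P)) hPv hPh (hmem f (by simp))
      (fun i => hmem _ (by fin_cases i <;> simp))
  exact eq_top_of_span_embXv_sup_map_embFv_eq_top (hprime j).not_isUnit hJ

/-- Lemma 3.9, case (II)(a). If `v = ∏ pᵢ^{sᵢ}` with every `sᵢ > 1` and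
`p_j² ∣ h` for some `j`, and `R = k[X_1,…,X_m,Y,Z,T]/(G)` is regular, then `k[Z,T]/(f)`
is regular. -/
theorem stmt10 (k : Type) [Field k] [PerfectField k] (m : ℕ)
    (v : MvPolynomial (Fin m) k) (h : MvPolynomial (Fin m ⊕ Fin 2) k)
    (f : MvPolynomial (Fin 2) k)
    (hdom : (Ideal.span {Gpoly k m v h f}).IsPrime)
    (n : ℕ) (p : Fin n → MvPolynomial (Fin m) k) (s : Fin n → ℕ)
    (hprime : ∀ i, Prime (p i)) (hs : ∀ i, 1 < s i)
    (hdist : ∀ i j, i ≠ j → ¬ Associated (p i) (p j))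
    (hfact : v = ∏ i, p i ^ s i)
    (j : Fin n)
    (hdvd : (rename (Sum.inl : Fin m → Fin m ⊕ Fin 2) (p j)) ^ 2 ∣ h)
    (hreg : JacRegular k m v h f) :
    JacRegularf k f :=
  stmt10_general k m v h f n p s hprime hs hfact j hdvd hreg
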